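/- Let ρ, ρ̄, and σ be positive semidefinite matrices of the same size, let λ > 0 with ρ̄ ≤ λσ, and let ε ∈ (0, tr ρ] with Δ(ρ, ρ̄) < ε. Then D_H^ε(ρ‖σ) ≤ log₂(λ) − log₂(1 − Δ(ρ, ρ̄)/ε). -/

import Mathlib

open scoped BigOperators ComplexOrder
open Matrix Filter MeasureTheory

noncomputable section

namespace QMarkov

variable {ι : Type*}

/-- Positive semidefinite square root of a matrix (junk value `0` if not PSD). -/
noncomputable def matSqrt [Fintype ι] (A : Matrix ι ι ℂ) : Matrix ι ι ℂ := by
  classical exact if h : A.PosSemidef then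
      (h.1.eigenvectorUnitary : Matrix ι ι ℂ) *
        Matrix.diagonal (fun i => ((Real.sqrt (h.1.eigenvalues i) : ℝ) : ℂ)) *
        (star h.1.eigenvectorUnitary : Matrix ι ι ℂ) else 0

/-- Trace norm (sum of singular values). -/
noncomputable def traceNorm [Fintype ι] (A : Matrix ι ι ℂ) : ℝ :=
  (matSqrt (Aᴴ * A)).trace.re

/-- Fidelity `F(ρ,σ) = ‖√ρ √σ‖₁`. -/
noncomputable def fid [Fintype ι] (ρ σ : Matrix ι ι ℂ) : ℝ :=
  traceNorm (matSqrt ρ * matSqrt σ)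

/-- Generalized trace distance `Δ(ρ,σ) = ½‖ρ-σ‖₁ + ½|tr(ρ-σ)|`. -/
noncomputable def tdist [Fintype ι] (ρ σ : Matrix ι ι ℂ) : ℝ :=
  (1 / 2) * traceNorm (ρ - σ) + (1 / 2) * ‖(ρ - σ).trace‖

/-- Von Neumann entropy `H(ρ) = -∑ᵢ λᵢ log₂ λᵢ` (junk `0` if not Hermitian);
the convention `0 · log₂ 0 = 0` is automatic since `Real.logb 2 0 = 0`. -/
noncomputable def vnEntropy [Fintype ι] (A : Matrix ι ι ℂ) : ℝ := by
  classical exact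
    if h : A.IsHermitian then -∑ i, h.eigenvalues i * Real.logb 2 (h.eigenvalues i) else 0

/-- Matrix base-2 logarithm on the support of a Hermitian matrix (junk `0` if not Hermitian). -/
noncomputable def mlog [Fintype ι] (A : Matrix ι ι ℂ) : Matrix ι ι ℂ := by
  classical exact
    if h : A.IsHermitian then
      (h.eigenvectorUnitary : Matrix ι ι ℂ) *
        Matrix.diagonal (fun i => (Real.logb 2 (h.eigenvalues i) : ℂ)) *
        (h.eigenvectorUnitary : Matrix ι ι ℂ)ᴴ
    else 0

/-- Square root of the Moore–Penrose pseudoinverse of a Hermitian PSD matrix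
(junk `0` if not Hermitian). -/
noncomputable def pinvSqrt [Fintype ι] (A : Matrix ι ι ℂ) : Matrix ι ι ℂ := by
  classical exact
    if h : A.IsHermitian then
      (h.eigenvectorUnitary : Matrix ι ι ℂ) *
        Matrix.diagonal (fun i => ((Real.sqrt (h.eigenvalues i))⁻¹ : ℂ)) *
        (h.eigenvectorUnitary : Matrix ι ι ℂ)ᴴ
    else 0

/-- Relative entropy `D(ρ‖σ)`, equal to `tr(ρ(log₂ρ - log₂σ))/tr ρ` when the support of
`ρ` is contained in the support of `σ`, and `+∞` otherwise. -/
noncomputable def relEnt [Fintype ι] (ρ σ : Matrix ι ι ℂ) : EReal := by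
  classical exact
    if ∀ v : ι → ℂ, σ *ᵥ v = 0 → ρ *ᵥ v = 0 then
      (((ρ * (mlog ρ - mlog σ)).trace.re / ρ.trace.re : ℝ) : EReal)
    else ⊤

/-- `n`-fold tensor power of a matrix. -/
def tpow (A : Matrix ι ι ℂ) (n : ℕ) : Matrix (Fin n → ι) (Fin n → ι) ℂ :=
  Matrix.of fun x y => ∏ i, A (x i) (y i)

/-- Permutation invariance of a matrix on an `n`-fold tensor power space. -/
def permInv {n : ℕ} (ρ : Matrix (Fin n → ι) (Fin n → ι) ℂ) : Prop :=
  ∀ π : Equiv.Perm (Fin n), ∀ x y, ρ (x ∘ π) (y ∘ π) = ρ x y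

/-- Rank-one projector `|φ⟩⟨φ|`. -/
def vecOuter (φ : ι → ℂ) : Matrix ι ι ℂ :=
  Matrix.of fun i j => φ i * star (φ j)

variable {A B C D E : Type*}

/-- Partial trace over the second factor. -/
def ptr2 [Fintype E] (M : Matrix (D × E) (D × E) ℂ) : Matrix D D ℂ :=
  Matrix.of fun d d' => ∑ e, M (d, e) (d', e)

/-- Partial trace over the `n` copies of `E` of a matrix on `(D ⊗ E)^⊗n`. -/
def ptrPow [Fintype E] {n : ℕ} (M : Matrix (Fin n → D × E) (Fin n → D × E) ℂ) :
    Matrix (Fin n → D) (Fin n → D) ℂ :=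
  Matrix.of fun x y => ∑ e : Fin n → E, M (fun i => (x i, e i)) (fun i => (y i, e i))

/-- Marginal `ρ_AB` of a tripartite matrix. -/
def margAB [Fintype C] (ρ : Matrix (A × B × C) (A × B × C) ℂ) : Matrix (A × B) (A × B) ℂ :=
  Matrix.of fun x y => ∑ c, ρ (x.1, x.2, c) (y.1, y.2, c)

/-- Marginal `ρ_BC` of a tripartite matrix. -/
def margBC [Fintype A] (ρ : Matrix (A × B × C) (A × B × C) ℂ) : Matrix (B × C) (B × C) ℂ :=
  Matrix.of fun x y => ∑ a, ρ (a, x.1, x.2) (a, y.1, y.2)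

/-- Marginal `ρ_B` of a tripartite matrix. -/
def margB [Fintype A] [Fintype C] (ρ : Matrix (A × B × C) (A × B × C) ℂ) : Matrix B B ℂ :=
  Matrix.of fun b b' => ∑ a, ∑ c, ρ (a, b, c) (a, b', c)

/-- Conditional mutual information `I(A:C|B)_ρ = H(ρ_AB) + H(ρ_BC) - H(ρ_B) - H(ρ_ABC)`. -/
noncomputable def cmi [Fintype A] [Fintype B] [Fintype C]
    (ρ : Matrix (A × B × C) (A × B × C) ℂ) : ℝ :=
  vnEntropy (margAB ρ) + vnEntropy (margBC ρ) - vnEntropy (margB ρ) - vnEntropy ρ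

/-- Application of `I_A ⊗ T` to a matrix on `A ⊗ B`, for `T` a map from matrices over `B`
to matrices over `B ⊗ C`. -/
def extT (T : Matrix B B ℂ → Matrix (B × C) (B × C) ℂ)
    (ρ : Matrix (A × B) (A × B) ℂ) : Matrix (A × B × C) (A × B × C) ℂ :=
  Matrix.of fun x y => T (Matrix.of fun b b' => ρ (x.1, b) (y.1, b')) x.2 y.2

/-- `M ⊗ id` on `B ⊗ C`. -/
def kronId (M : Matrix B B ℂ) : Matrix (B × C) (B × C) ℂ := by
  classical exact Matrix.of fun x y => if x.2 = y.2 then M x.1 y.1 else 0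

end QMarkov

namespace QMarkov
variable {A B C : Type*}

/-- Marginal on the first and third factors of a tripartite matrix. -/
def marg13 [Fintype B] (ρ : Matrix (A × B × C) (A × B × C) ℂ) : Matrix (A × C) (A × C) ℂ :=
  Matrix.of fun x y => ∑ b, ρ (x.1, b, x.2) (y.1, b, y.2)

/-- Marginal on the third factor of a tripartite matrix. -/
def marg3 [Fintype A] [Fintype B] (ρ : Matrix (A × B × C) (A × B × C) ℂ) : Matrix C C ℂ :=
  Matrix.of fun c c' => ∑ a, ∑ b, ρ (a, b, c) (a, b, c')

/-- Conditional mutual information `I(first : second | third)` of a tripartite matrix, i.e.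
for `ρ` on `A ⊗ C ⊗ E` this is `I(A:C|E)_ρ = H(ρ_AE) + H(ρ_CE) - H(ρ_E) - H(ρ_ACE)`. -/
noncomputable def cmi13 [Fintype A] [Fintype B] [Fintype C]
    (ρ : Matrix (A × B × C) (A × B × C) ℂ) : ℝ :=
  vnEntropy (marg13 ρ) + vnEntropy (margBC ρ) - vnEntropy (marg3 ρ) - vnEntropy ρ

end QMarkov
namespace QMarkov

/-- The set defining the generalized relative entropy: values `tr(Qσ)/ε` over tests
`0 ≤ Q ≤ id` with `tr(Qρ) ≥ ε`. -/
def DHset {ι : Type*} [Fintype ι] [DecidableEq ι] (ε : ℝ) (ρ σ : Matrix ι ι ℂ) : Set ℝ :=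
  {x | ∃ Q : Matrix ι ι ℂ, Q.PosSemidef ∧ (1 - Q).PosSemidef ∧
    ε ≤ (Q * ρ).trace.re ∧ x = (Q * σ).trace.re / ε}

/-- Generalized relative entropy `D_H^ε(ρ‖σ)`, defined by `2^{-D_H^ε} = inf tr(Qσ)/ε`
(and `⊤` when the infimum is `0`, corresponding to `2^{-D} = 0`). -/
noncomputable def DH {ι : Type*} [Fintype ι] [DecidableEq ι] (ε : ℝ)
    (ρ σ : Matrix ι ι ℂ) : EReal := by
  classical exact
    if 0 < sInf (DHset ε ρ σ) then ((-Real.logb 2 (sInf (DHset ε ρ σ)) : ℝ) : EReal) else ⊤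


/-! A test `0 ≤ Q ≤ 1` has, in an eigenbasis of `ρ - ρ̄`, diagonal entries in `[0, 1]`, so
`tr(Q(ρ - ρ̄))` is at most the sum of the positive eigenvalues of `ρ - ρ̄`, which is
`(‖ρ - ρ̄‖₁ + tr(ρ - ρ̄)) / 2 ≤ Δ(ρ, ρ̄)`. Hence every test with `tr(Qρ) ≥ ε` has
`λ tr(Qσ) ≥ tr(Qρ̄) ≥ ε - Δ(ρ, ρ̄)`, which bounds the infimum defining `2^{-D_H^ε(ρ‖σ)}`
from below by `(1 - Δ(ρ, ρ̄)/ε) / λ`. -/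

section Spectral
variable {n : Type*} [Fintype n] [DecidableEq n]

lemma matSqrt_eq_cfc {A : Matrix n n ℂ} (hA : A.PosSemidef) : matSqrt A = cfc Real.sqrt A := by
  rw [matSqrt, dif_pos hA, hA.1.cfc_eq, IsHermitian.cfc, Unitary.conjStarAlgAut_apply]
  congr 2
  ext i j
  simp only [diagonal_apply]
  split_ifs <;> rfl

lemma re_trace_cfc {H : Matrix n n ℂ} (hH : H.IsHermitian) (f : ℝ → ℝ) :
    (cfc f H).trace.re = ∑ i, f (hH.eigenvalues i) := by
  rw [hH.cfc_eq, IsHermitian.cfc, Unitary.conjStarAlgAut_apply, trace_mul_cycle,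
    Unitary.coe_star_mul_self, Matrix.one_mul, trace_diagonal, Complex.re_sum]
  simp

lemma traceNorm_eq_sum_abs_eigenvalues {H : Matrix n n ℂ} (hH : H.IsHermitian) :
    traceNorm H = ∑ i, |hH.eigenvalues i| := by
  have hsq : Hᴴ * H = cfc (fun x : ℝ => x * x) H := by
    rw [hH.eq, cfc_mul (fun x : ℝ => x) (fun x => x) H, cfc_id' ℝ H]
  rw [traceNorm, matSqrt_eq_cfc (posSemidef_conjTranspose_mul_self H), hsq,
    ← cfc_comp Real.sqrt (fun x : ℝ => x * x) H, re_trace_cfc hH]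
  simp only [Function.comp_apply, Real.sqrt_mul_self_eq_abs]

lemma re_trace_mul_eq_sum_eigenvalues {H : Matrix n n ℂ} (hH : H.IsHermitian) (Q : Matrix n n ℂ) :
    (Q * H).trace.re = ∑ i, ((star (hH.eigenvectorUnitary : Matrix n n ℂ) * Q *
      hH.eigenvectorUnitary) i i).re * hH.eigenvalues i := by
  conv_lhs => rw [hH.spectral_theorem, Unitary.conjStarAlgAut_apply, ← Matrix.mul_assoc,
    trace_mul_cycle, ← Matrix.mul_assoc]
  simp [trace, Matrix.mul_diagonal]

end Spectral

section Tests
variable {n : Type*} [Fintype n] {Q : Matrix n n ℂ}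

lemma re_diag_star_mul_mul_nonneg (hQ : Q.PosSemidef) (U : Matrix n n ℂ) (i : n) :
    0 ≤ ((star U * Q * U) i i).re := by
  have hconj : (star U * Q * U).PosSemidef := by
    simpa [star_eq_conjTranspose] using hQ.conjTranspose_mul_mul_same U
  exact (RCLike.nonneg_iff.mp hconj.diag_nonneg).1

variable [DecidableEq n]

lemma re_diag_star_mul_mul_le_one (hQ1 : (1 - Q).PosSemidef) (U : unitary (Matrix n n ℂ))
    (i : n) : ((star (U : Matrix n n ℂ) * Q * U) i i).re ≤ 1 := by
  have h := re_diag_star_mul_mul_nonneg hQ1 U i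
  rw [Matrix.mul_sub, Matrix.sub_mul, Matrix.mul_one, Unitary.coe_star_mul_self] at h
  simpa using h

lemma re_trace_mul_nonneg (hQ : Q.PosSemidef) {S : Matrix n n ℂ} (hS : S.PosSemidef) :
    0 ≤ (Q * S).trace.re := by
  rw [re_trace_mul_eq_sum_eigenvalues hS.1]
  exact Finset.sum_nonneg fun i _ =>
    mul_nonneg (re_diag_star_mul_mul_nonneg hQ _ i) (hS.eigenvalues_nonneg i)

lemma re_trace_mul_le_of_isHermitian (hQ : Q.PosSemidef) (hQ1 : (1 - Q).PosSemidef)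
    {H : Matrix n n ℂ} (hH : H.IsHermitian) :
    (Q * H).trace.re ≤ (∑ i, |hH.eigenvalues i| + ∑ i, hH.eigenvalues i) / 2 := by
  rw [re_trace_mul_eq_sum_eigenvalues hH, ← Finset.sum_add_distrib, Finset.sum_div]
  refine Finset.sum_le_sum fun i _ => ?_
  have hq0 := re_diag_star_mul_mul_nonneg hQ hH.eigenvectorUnitary i
  have hq1 := re_diag_star_mul_mul_le_one hQ1 hH.eigenvectorUnitary i
  cases abs_cases (hH.eigenvalues i) <;> nlinarith

lemma re_trace_mul_sub_le_tdist (hQ : Q.PosSemidef) (hQ1 : (1 - Q).PosSemidef)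
    {ρ ρbar : Matrix n n ℂ} (hρ : ρ.IsHermitian) (hρbar : ρbar.IsHermitian) :
    (Q * (ρ - ρbar)).trace.re ≤ tdist ρ ρbar := by
  have hH := hρ.sub hρbar
  have htrace : ∑ i, hH.eigenvalues i ≤ ‖(ρ - ρbar).trace‖ := by
    rw [hH.trace_eq_sum_eigenvalues, ← RCLike.ofReal_sum, RCLike.norm_ofReal]
    exact le_abs_self _
  rw [tdist, traceNorm_eq_sum_abs_eigenvalues hH]
  linarith [re_trace_mul_le_of_isHermitian hQ hQ1 hH]

end Tests

section HypothesisTesting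
variable {n : Type*} [Fintype n] [DecidableEq n] {ε : ℝ} {ρ σ : Matrix n n ℂ}

lemma DHset_nonempty (hε : ε ≤ ρ.trace.re) : (DHset ε ρ σ).Nonempty :=
  ⟨_, 1, .one, by simpa using PosSemidef.zero, by rwa [Matrix.one_mul], rfl⟩

lemma DH_le_neg_logb_of_forall_le {c : ℝ} (hc : 0 < c) (hne : (DHset ε ρ σ).Nonempty)
    (hlb : ∀ x ∈ DHset ε ρ σ, c ≤ x) : DH ε ρ σ ≤ ((-Real.logb 2 c : ℝ) : EReal) := by
  have hinf : c ≤ sInf (DHset ε ρ σ) := le_csInf hne hlb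
  rw [DH, if_pos (hc.trans_le hinf), EReal.coe_le_coe_iff, neg_le_neg_iff]
  exact Real.logb_le_logb_of_le one_lt_two hc hinf

lemma le_of_mem_DHset {ρbar : Matrix n n ℂ} (hρ : ρ.IsHermitian) (hρbar : ρbar.IsHermitian)
    {lam : ℝ} (hlam : 0 < lam) (hle : (lam • σ - ρbar).PosSemidef) (hε : 0 < ε) :
    ∀ x ∈ DHset ε ρ σ, (1 - tdist ρ ρbar / ε) / lam ≤ x := by
  rintro x ⟨Q, hQ, hQ1, hρQ, rfl⟩
  have hρbarQ : ε - tdist ρ ρbar ≤ (Q * ρbar).trace.re := by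
    have := re_trace_mul_sub_le_tdist hQ hQ1 hρ hρbar
    rw [Matrix.mul_sub, trace_sub, Complex.sub_re] at this
    linarith
  have hσQ : (Q * ρbar).trace.re ≤ lam * (Q * σ).trace.re := by
    have := re_trace_mul_nonneg hQ hle
    rw [Matrix.mul_sub, trace_sub, Complex.sub_re, Matrix.mul_smul, trace_smul,
      Complex.smul_re, smul_eq_mul] at this
    linarith
  rw [one_sub_div hε.ne', div_div, div_le_div_iff₀ (by positivity) hε]
  nlinarith

end HypothesisTesting

theorem DH_upper_bound_general
    {ι : Type*} [Fintype ι] [DecidableEq ι]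
    (ρ ρbar σ : Matrix ι ι ℂ)
    (hρ : ρ.PosSemidef) (hρbar : ρbar.PosSemidef)
    (lam : ℝ) (hlam : 0 < lam) (hle : (lam • σ - ρbar).PosSemidef)
    (ε : ℝ) (hε : 0 < ε) (hεtr : ε ≤ ρ.trace.re) (hΔ : tdist ρ ρbar < ε) :
    DH ε ρ σ ≤ ((Real.logb 2 lam - Real.logb 2 (1 - tdist ρ ρbar / ε) : ℝ) : EReal) := by
  have hgap : 0 < 1 - tdist ρ ρbar / ε := by rwa [sub_pos, div_lt_one hε]
  have hbound := DH_le_neg_logb_of_forall_le (div_pos hgap hlam) (DHset_nonempty hεtr)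
    (le_of_mem_DHset hρ.1 hρbar.1 hlam hle hε)
  rwa [Real.logb_div hgap.ne' hlam.ne', neg_sub] at hbound

/-- Upper bound on `D_H^ε(ρ‖σ)` from an operator `ρ̄ ≤ λσ` close to `ρ`. -/
theorem DH_upper_bound
    {ι : Type*} [Fintype ι] [DecidableEq ι]
    (ρ ρbar σ : Matrix ι ι ℂ)
    (hρ : ρ.PosSemidef) (hρbar : ρbar.PosSemidef) (hσ : σ.PosSemidef)
    (lam : ℝ) (hlam : 0 < lam) (hle : (lam • σ - ρbar).PosSemidef)
    (ε : ℝ) (hε : 0 < ε) (hεtr : ε ≤ ρ.trace.re) (hΔ : tdist ρ ρbar < ε) :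
    DH ε ρ σ ≤ ((Real.logb 2 lam - Real.logb 2 (1 - tdist ρ ρbar / ε) : ℝ) : EReal) :=
  DH_upper_bound_general ρ ρbar σ hρ hρbar lam hlam hle ε hε hεtr hΔ

end QMarkov
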